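/- Let g ≠ 0, κ > 0, and Q, Q' ∈ ℝ³ with |Q|, |Q'| < 1 and Q ≠ Q'. Define α(Q,k) := −g (ρ(k)/|k|)/(1 − (k/|k|)·Q) on 0 < |k| ≤ κ with ρ(k) = (2π)^{−3/2}(2|k|)^{−1/2}. Then ∫_{0 < |k| ≤ κ} |α(Q,k) − α(Q',k)|² dk = +∞, i.e. the difference of the two coherent factors is not square integrable near k = 0. -/

import Mathlib

/-!
The integrand `F k = (α(Q,k) - α(Q',k))²` is homogeneous of degree `-3` on `ℝ³`, so the measure
`F k dk` is invariant under the dilation `k ↦ 2k` and the integral over `0 < |k| ≤ κ / 2` equals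
the integral over `0 < |k| ≤ κ`. The two differ by the integral over the shell
`κ / 2 < |k| ≤ κ`, which is positive since `F` vanishes only on the plane `k ⊥ Q - Q'`; hence
neither integral is finite.
-/

open MeasureTheory Real

noncomputable def rhoNelson (k : EuclideanSpace ℝ (Fin 3)) : ℝ :=
  (2 * π) ^ (-(3 : ℝ) / 2) * (2 * ‖k‖) ^ (-(1 : ℝ) / 2)

/-- The coherent factor α(Q,k) = −g (ρ(k)/|k|) / (1 − k̂·Q). -/
noncomputable def alphaIR (g : ℝ) (Q k : EuclideanSpace ℝ (Fin 3)) : ℝ :=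
  -g * (rhoNelson k / ‖k‖) / (1 - (inner ℝ k Q : ℝ) / ‖k‖)

open Module
open scoped ENNReal InnerProductSpace

section Homogeneous

variable {E : Type*} [NormedAddCommGroup E] [NormedSpace ℝ E] [FiniteDimensional ℝ E]
  [MeasurableSpace E] [BorelSpace E] (μ : Measure E) [μ.IsAddHaarMeasure]

theorem setLIntegral_preimage_smul_of_homogeneous {F : E → ℝ≥0∞} {c : ℝ} (hc : 0 < c)
    (hF : ∀ k, ENNReal.ofReal (c ^ finrank ℝ E) * F (c • k) = F k) (s : Set E) :
    ∫⁻ k in (c • ·) ⁻¹' s, F k ∂μ = ∫⁻ k in s, F k ∂μ := by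
  have hemb : MeasurableEmbedding (c • · : E → E) := measurableEmbedding_const_smul₀ hc.ne'
  calc ∫⁻ k in (c • ·) ⁻¹' s, F k ∂μ
      = ENNReal.ofReal (c ^ finrank ℝ E) * ∫⁻ k in (c • ·) ⁻¹' s, F (c • k) ∂μ := by
        simp_rw [← lintegral_const_mul' _ _ ENNReal.ofReal_ne_top, hF]
    _ = ENNReal.ofReal (c ^ finrank ℝ E) * ∫⁻ k in s, F k ∂(Measure.map (c • ·) μ) := by
        rw [hemb.restrict_map, hemb.lintegral_map]
    _ = ∫⁻ k in s, F k ∂μ := by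
        have hd : 0 < c ^ finrank ℝ E := pow_pos hc _
        rw [Measure.map_addHaar_smul μ hc.ne', Measure.restrict_smul, lintegral_smul_measure,
          smul_eq_mul, ← mul_assoc, ← ENNReal.ofReal_mul hd.le, abs_inv, abs_of_pos hd,
          mul_inv_cancel₀ hd.ne', ENNReal.ofReal_one, one_mul]

theorem setLIntegral_punctured_closedBall_eq_top_of_homogeneous {F : E → ℝ≥0∞} {c : ℝ}
    (hc : 1 < c) (hF : ∀ k, ENNReal.ofReal (c ^ finrank ℝ E) * F (c • k) = F k)
    {r : ℝ} (hr : 0 < r) (hA : ∫⁻ k in {k | r / c < ‖k‖ ∧ ‖k‖ ≤ r}, F k ∂μ ≠ 0) :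
    ∫⁻ k in {k : E | 0 < ‖k‖ ∧ ‖k‖ ≤ r}, F k ∂μ = ⊤ := by
  have hc₀ : 0 < c := one_pos.trans hc
  have hrc : 0 < r / c := div_pos hr hc₀
  have hrc' : r / c ≤ r := div_le_self hr.le hc.le
  have hsplit : {k : E | 0 < ‖k‖ ∧ ‖k‖ ≤ r}
      = (c • ·) ⁻¹' {k | 0 < ‖k‖ ∧ ‖k‖ ≤ r} ∪ {k | r / c < ‖k‖ ∧ ‖k‖ ≤ r} := by
    ext k
    simp only [Set.mem_union, Set.mem_preimage, Set.mem_ofPred_eq, norm_smul,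
      Real.norm_of_nonneg hc₀.le, mul_pos_iff_of_pos_left hc₀, ← le_div_iff₀' hc₀]
    grind
  have hdisj : Disjoint ((c • ·) ⁻¹' {k : E | 0 < ‖k‖ ∧ ‖k‖ ≤ r})
      {k | r / c < ‖k‖ ∧ ‖k‖ ≤ r} := by
    refine Set.disjoint_left.mpr fun k hk hk' => ?_
    simp only [Set.mem_preimage, Set.mem_ofPred_eq, norm_smul, Real.norm_of_nonneg hc₀.le,
      ← le_div_iff₀' hc₀] at hk hk'
    linarith [hk.2, hk'.1]
  have hmeas : MeasurableSet {k : E | r / c < ‖k‖ ∧ ‖k‖ ≤ r} :=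
    (measurableSet_lt measurable_const measurable_norm).inter
      (measurableSet_le measurable_norm measurable_const)
  by_contra hfin
  have h := lintegral_union (μ := μ) (f := F) hmeas hdisj
  rw [← hsplit, setLIntegral_preimage_smul_of_homogeneous μ hc₀ hF] at h
  exact hA ((ENNReal.add_right_inj hfin).mp (h.symm.trans (add_zero _).symm))

end Homogeneous

theorem ae_inner_ne_zero {E : Type*} [NormedAddCommGroup E] [InnerProductSpace ℝ E]
    [FiniteDimensional ℝ E] [MeasurableSpace E] [BorelSpace E] (μ : Measure E)
    [μ.IsAddHaarMeasure] {v : E} (hv : v ≠ 0) : ∀ᵐ k ∂μ, ⟪k, v⟫_ℝ ≠ 0 := by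
  have hker : LinearMap.ker (innerₛₗ ℝ v) ≠ ⊤ := fun h => by
    have : ⟪v, v⟫_ℝ = 0 := by simpa using LinearMap.ext_iff.mp (LinearMap.ker_eq_top.mp h) v
    exact hv (inner_self_eq_zero.mp this)
  rw [ae_iff]
  refine measure_mono_null (fun k hk => ?_) (Measure.addHaar_submodule μ _ hker)
  simpa [real_inner_comm] using hk

theorem measure_annulus_ne_zero {E : Type*} [NormedAddCommGroup E] [NormedSpace ℝ E]
    [Nontrivial E] [MeasurableSpace E] (μ : Measure E) [μ.IsOpenPosMeasure] {a r : ℝ}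
    (ha : 0 ≤ a) (har : a < r) :
    μ {k : E | a < ‖k‖ ∧ ‖k‖ ≤ r} ≠ 0 := by
  obtain ⟨k, hk⟩ := exists_norm_eq E (show 0 ≤ (a + r) / 2 by linarith)
  have hopen : IsOpen {k : E | a < ‖k‖ ∧ ‖k‖ < r} :=
    (isOpen_lt continuous_const continuous_norm).inter (isOpen_lt continuous_norm continuous_const)
  have hk_mem : k ∈ {k : E | a < ‖k‖ ∧ ‖k‖ < r} := by
    constructor <;> linarith
  exact ne_bot_of_le_ne_bot (hopen.measure_ne_zero μ ⟨k, hk_mem⟩)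
    (measure_mono fun k hk => ⟨hk.1, hk.2.le⟩)

theorem setLIntegral_ne_zero_of_ae_ne_zero {α : Type*} [MeasurableSpace α] {μ : Measure α}
    {f : α → ℝ≥0∞} (hf : Measurable f) (hf₀ : ∀ᵐ x ∂μ, f x ≠ 0) {s : Set α}
    (hs : MeasurableSet s) (hμs : μ s ≠ 0) : ∫⁻ x in s, f x ∂μ ≠ 0 := by
  intro h
  rw [setLIntegral_eq_zero_iff hs hf] at h
  refine hμs (measure_eq_zero_iff_ae_notMem.mpr ?_)
  filter_upwards [h, hf₀] with x hzero hne hx using hne (hzero hx)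

theorem rhoNelson_smul {c : ℝ} (hc : 0 < c) (k : EuclideanSpace ℝ (Fin 3)) :
    rhoNelson (c • k) = c ^ (-(1 : ℝ) / 2) * rhoNelson k := by
  rw [rhoNelson, rhoNelson, norm_smul, Real.norm_of_nonneg hc.le, mul_left_comm 2 c,
    Real.mul_rpow hc.le (by positivity)]
  ring

theorem rhoNelson_pos {k : EuclideanSpace ℝ (Fin 3)} (hk : k ≠ 0) : 0 < rhoNelson k := by
  have := norm_pos_iff.mpr hk
  unfold rhoNelson
  exact mul_pos (by positivity) (Real.rpow_pos_of_pos (by positivity) _)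

theorem alphaIR_smul (g : ℝ) (Q : EuclideanSpace ℝ (Fin 3)) {c : ℝ} (hc : 0 < c)
    (k : EuclideanSpace ℝ (Fin 3)) :
    alphaIR g Q (c • k) = c ^ (-(3 : ℝ) / 2) * alphaIR g Q k := by
  have h : c ^ (-(3 : ℝ) / 2) = c ^ (-(1 : ℝ) / 2) / c := by
    rw [← Real.rpow_sub_one hc.ne']; norm_num
  rw [alphaIR, alphaIR, rhoNelson_smul hc, norm_smul, Real.norm_of_nonneg hc.le,
    real_inner_smul_left, mul_div_mul_left _ _ hc.ne', h]
  ring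

theorem alphaIR_ne_of_inner_ne {g : ℝ} (hg : g ≠ 0) {Q Q' k : EuclideanSpace ℝ (Fin 3)}
    (hk : ⟪k, Q⟫_ℝ ≠ ⟪k, Q'⟫_ℝ) : alphaIR g Q k ≠ alphaIR g Q' k := by
  have hk₀ : k ≠ 0 := by rintro rfl; simp at hk
  have hnorm : 0 < ‖k‖ := norm_pos_iff.mpr hk₀
  have hnum : -g * (rhoNelson k / ‖k‖) ≠ 0 :=
    mul_ne_zero (neg_ne_zero.mpr hg) (div_pos (rhoNelson_pos hk₀) hnorm).ne'
  -- `t ↦ N / t` is injective on all of `ℝ` for `N ≠ 0`, the junk value `N / 0 = 0` included.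
  rwa [alphaIR, alphaIR, div_eq_mul_inv (-g * _) (1 - _), div_eq_mul_inv (-g * _) (1 - _), Ne,
    mul_right_inj' hnum, inv_inj, sub_right_inj, div_left_inj' hnorm.ne']

@[fun_prop]
theorem measurable_alphaIR (g : ℝ) (Q : EuclideanSpace ℝ (Fin 3)) :
    Measurable (alphaIR g Q) := by
  unfold alphaIR rhoNelson
  fun_prop

theorem sq_sub_alphaIR_smul (g : ℝ) (Q Q' : EuclideanSpace ℝ (Fin 3)) {c : ℝ} (hc : 0 < c)
    (k : EuclideanSpace ℝ (Fin 3)) :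
    c ^ 3 * (alphaIR g Q (c • k) - alphaIR g Q' (c • k)) ^ 2
      = (alphaIR g Q k - alphaIR g Q' k) ^ 2 := by
  rw [alphaIR_smul g Q hc, alphaIR_smul g Q' hc, ← mul_sub, mul_pow, ← mul_assoc,
    ← Real.rpow_natCast, ← Real.rpow_natCast (c ^ _), ← Real.rpow_mul hc.le,
    ← Real.rpow_add hc]
  norm_num

theorem alphaIR_diff_not_square_integrable_general (g κ : ℝ) (Q Q' : EuclideanSpace ℝ (Fin 3))
    (hg : g ≠ 0) (hκ : 0 < κ) (hQQ' : Q ≠ Q') :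
    (∫⁻ k in {k : EuclideanSpace ℝ (Fin 3) | 0 < ‖k‖ ∧ ‖k‖ ≤ κ},
        ENNReal.ofReal ((alphaIR g Q k - alphaIR g Q' k) ^ 2)) = ⊤ := by
  refine setLIntegral_punctured_closedBall_eq_top_of_homogeneous volume one_lt_two
    (fun k => ?_) hκ ?_
  · rw [finrank_euclideanSpace_fin, ← ENNReal.ofReal_mul (by positivity),
      sq_sub_alphaIR_smul g Q Q' two_pos]
  · refine setLIntegral_ne_zero_of_ae_ne_zero (by fun_prop) ?_ (by measurability)
      (measure_annulus_ne_zero volume (by positivity) (half_lt_self hκ))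
    filter_upwards [ae_inner_ne_zero volume (sub_ne_zero.mpr hQQ')] with k hk
    rw [inner_sub_right, sub_ne_zero] at hk
    simpa [sub_eq_zero] using alphaIR_ne_of_inner_ne hg hk

/-- Infrared catastrophe: for g ≠ 0 and Q ≠ Q' with |Q|,|Q'| < 1, the difference of the
coherent factors is not square integrable near k = 0:
∫_{0 < |k| ≤ κ} |α(Q,k) − α(Q',k)|² dk = +∞. -/
theorem alphaIR_diff_not_square_integrable (g κ : ℝ) (Q Q' : EuclideanSpace ℝ (Fin 3))
    (hg : g ≠ 0) (hκ : 0 < κ) (hQ : ‖Q‖ < 1) (hQ' : ‖Q'‖ < 1) (hQQ' : Q ≠ Q') :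
    (∫⁻ k in {k : EuclideanSpace ℝ (Fin 3) | 0 < ‖k‖ ∧ ‖k‖ ≤ κ},
        ENNReal.ofReal ((alphaIR g Q k - alphaIR g Q' k) ^ 2)) = ⊤ :=
  alphaIR_diff_not_square_integrable_general g κ Q Q' hg hκ hQQ'
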